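/- arXiv:1404.4306 — 2 statements merged into one kernel-verified Lean document; each statement's English description precedes it below -/
import Mathlib

section
/- Let Φ be a Musielak–Orlicz function and (Φ_n) a non-decreasing sequence of finite-valued Musielak–Orlicz functions converging upward to Φ. If a measurable function u belongs to L^{Φ_n} for every n and the sequence of Luxemburg norms ‖u‖_{Φ_n} is bounded, then u ∈ L^Φ and ‖u‖_{Φ_n} ↑ ‖u‖_Φ. -/
open MeasureTheory ENNReal NNReal Filter Topology

noncomputable section

/-- A measure is non-atomic if every set of positive measure contains a
measurable subset of strictly smaller positive measure. -/
def IsNonatomic {T : Type*} [MeasurableSpace T] (μ : Measure T) : Prop :=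
  ∀ s : Set T, MeasurableSet s → 0 < μ s →
    ∃ t : Set T, t ⊆ s ∧ MeasurableSet t ∧ 0 < μ t ∧ μ t < μ s

/-- A Musielak--Orlicz function on `(T, Σ, μ)`. -/
structure MOFunction (T : Type*) [MeasurableSpace T] (μ : Measure T) where
  toFun : T → ℝ≥0∞ → ℝ≥0∞
  measurable' : ∀ u : ℝ≥0∞, Measurable fun t => toFun t u
  convex' : ∀ᵐ t ∂μ, ∀ a b : ℝ≥0∞, ∀ p : ℝ≥0, p ≤ 1 →
    toFun t (p • a + (1 - p) • b) ≤ p • toFun t a + (1 - p) • toFun t b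
  lsc' : ∀ᵐ t ∂μ, LowerSemicontinuous (toFun t)
  zero' : ∀ᵐ t ∂μ, toFun t 0 = 0
  limZero' : ∀ᵐ t ∂μ, Tendsto (toFun t) (nhdsWithin 0 (Set.Ioi 0)) (nhds 0)
  top' : ∀ᵐ t ∂μ, toFun t ⊤ = ⊤

namespace MOFunction

variable {T : Type*} [MeasurableSpace T] {μ : Measure T}

/-- Left derivative of a (convex) function `φ : ℝ≥0∞ → ℝ≥0∞`, with the
convention that it vanishes at `0`. -/
def leftDeriv (φ : ℝ≥0∞ → ℝ≥0∞) (u : ℝ≥0∞) : ℝ≥0∞ :=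
  ⨆ x ∈ Set.Iio u, (φ u - φ x) / (u - x)

/-- Right derivative of a (convex) function `φ : ℝ≥0∞ → ℝ≥0∞`. -/
def rightDeriv (φ : ℝ≥0∞ → ℝ≥0∞) (u : ℝ≥0∞) : ℝ≥0∞ :=
  ⨅ x ∈ Set.Ioi u, (φ x - φ u) / (x - u)

/-- The complementary (Young conjugate) function `Φ*`. -/
def conj (P : MOFunction T μ) : T → ℝ≥0∞ → ℝ≥0∞ :=
  fun t v => ⨆ u ∈ Set.Ioi (0 : ℝ≥0∞), u * v - P.toFun t u

/-- The modular `I_Φ(u) = ∫ Φ(t, |u(t)|) dμ`. -/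
def modular (P : MOFunction T μ) (u : T → ℝ) : ℝ≥0∞ :=
  ∫⁻ t, P.toFun t (ENNReal.ofReal |u t|) ∂μ

/-- The modular of the complementary function, `I_{Φ*}`. -/
def modularConj (P : MOFunction T μ) (v : T → ℝ) : ℝ≥0∞ :=
  ∫⁻ t, P.conj t (ENNReal.ofReal |v t|) ∂μ

/-- Membership in the Musielak--Orlicz space `L^Φ`. -/
def memLPhi (P : MOFunction T μ) (u : T → ℝ) : Prop :=
  Measurable u ∧ ∃ l : ℝ, 0 < l ∧ P.modular (fun t => l * u t) < ⊤

/-- Membership in `L^{Φ*}`. -/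
def memLPhiConj (P : MOFunction T μ) (v : T → ℝ) : Prop :=
  Measurable v ∧ ∃ l : ℝ, 0 < l ∧ P.modularConj (fun t => l * v t) < ⊤

/-- The Luxemburg norm on `L^Φ`. -/
def luxNorm (P : MOFunction T μ) (u : T → ℝ) : ℝ :=
  sInf {l : ℝ | 0 < l ∧ P.modular (fun t => u t / l) ≤ 1}

/-- The Luxemburg norm on `L^{Φ*}`. -/
def luxNormConj (P : MOFunction T μ) (v : T → ℝ) : ℝ :=
  sInf {l : ℝ | 0 < l ∧ P.modularConj (fun t => v t / l) ≤ 1}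

/-- The Orlicz norm on `L^Φ`. -/
def orliczNorm (P : MOFunction T μ) (u : T → ℝ) : ℝ :=
  sSup {r : ℝ | ∃ v : T → ℝ, Measurable v ∧ P.modularConj v ≤ 1 ∧
    r = |∫ t, u t * v t ∂μ|}

/-- The Orlicz norm on `L^{Φ*}`. -/
def orliczNormConj (P : MOFunction T μ) (v : T → ℝ) : ℝ :=
  sSup {r : ℝ | ∃ u : T → ℝ, Measurable u ∧ P.modular u ≤ 1 ∧
    r = |∫ t, u t * v t ∂μ|}

/-- The Amemiya functional `inf_{k>0} (1 + I_Φ(ku))/k` (equal to the Orlicz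
norm). -/
def amemiya (P : MOFunction T μ) (u : T → ℝ) : ℝ≥0∞ :=
  ⨅ k ∈ Set.Ioi (0 : ℝ), (1 + P.modular (fun t => k * u t)) / ENNReal.ofReal k

/-- The set `K(u)` of positive numbers attaining the infimum in the Amemiya
norm. -/
def Kset (P : MOFunction T μ) (u : T → ℝ) : Set ℝ :=
  {k | 0 < k ∧ (1 + P.modular (fun t => k * u t)) / ENNReal.ofReal k = P.amemiya u}

/-- `k_u^* = inf{k > 0 : I_{Φ*}(Φ'_+(t, |k u(t)|)) ≥ 1}`. -/
def kStar (P : MOFunction T μ) (u : T → ℝ) : ℝ :=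
  sInf {k : ℝ | 0 < k ∧
    1 ≤ ∫⁻ t, P.conj t (rightDeriv (P.toFun t) (ENNReal.ofReal (k * |u t|))) ∂μ}

/-- `b_{Φ*}(t) = sup{v ≥ 0 : Φ*(t,v) < ∞}`. -/
def bConj (P : MOFunction T μ) (t : T) : ℝ≥0∞ :=
  sSup {v : ℝ≥0∞ | P.conj t v < ⊤}

/-- `a_{Φ*}(t) = sup{v ≥ 0 : Φ*(t,v) = 0}`. -/
def aConj (P : MOFunction T μ) (t : T) : ℝ≥0∞ :=
  sSup {v : ℝ≥0∞ | P.conj t v = 0}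

/-- The `Δ₂`-condition. -/
def Delta2 (P : MOFunction T μ) : Prop :=
  ∃ (K : ℝ≥0∞) (f : T → ℝ≥0∞), Measurable f ∧ (∫⁻ t, P.toFun t (f t) ∂μ) < ⊤ ∧
    ∀ᵐ t ∂μ, ∀ u : ℝ≥0∞, f t ≤ u → P.toFun t (2 * u) ≤ K * P.toFun t u

/-- Dual norm of a functional with respect to the Luxemburg norm. -/
def dualNormLux (P : MOFunction T μ) (f : (T → ℝ) →ₗ[ℝ] ℝ) : ℝ :=
  sSup {r : ℝ | ∃ u : T → ℝ, P.memLPhi u ∧ P.luxNorm u ≤ 1 ∧ r = |f u|}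

/-- Dual norm of a functional with respect to the Orlicz norm. -/
def dualNormOrlicz (P : MOFunction T μ) (f : (T → ℝ) →ₗ[ℝ] ℝ) : ℝ :=
  sSup {r : ℝ | ∃ u : T → ℝ, P.memLPhi u ∧ P.orliczNorm u ≤ 1 ∧ r = |f u|}

/-- The order continuous part `f_c(u) = inf{sup_n f(u_n) : 0 ≤ u_n ↑ u}` of a
(positive) functional, evaluated at a nonnegative `u`. -/
def orderContPart (P : MOFunction T μ) (f : (T → ℝ) →ₗ[ℝ] ℝ) (u : T → ℝ) : ℝ :=
  sInf {c : ℝ | ∃ w : ℕ → T → ℝ, (∀ n t, 0 ≤ w n t) ∧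
    (∀ n t, w n t ≤ w (n + 1) t) ∧
    (∀ t, Tendsto (fun n => w n t) atTop (nhds (u t))) ∧ c = ⨆ n, f (w n)}

/-- A functional is purely singular if its order continuous component
vanishes. -/
def PurelySingular (P : MOFunction T μ) (f : (T → ℝ) →ₗ[ℝ] ℝ) : Prop :=
  ∀ u : T → ℝ, P.memLPhi u → (∀ t, 0 ≤ u t) → P.orderContPart f u = 0

/-- `f` is a support functional at `u` in `L_0^Φ`. -/
def IsSupportAt (P : MOFunction T μ) (f : (T → ℝ) →ₗ[ℝ] ℝ) (u : T → ℝ) : Prop :=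
  P.dualNormOrlicz f = 1 ∧ f u = P.orliczNorm u

/-- `u` is a smooth point of `L_0^Φ`: it has exactly one support functional
(as a functional on `L^Φ`). -/
def IsSmoothPoint (P : MOFunction T μ) (u : T → ℝ) : Prop :=
  (∃ f : (T → ℝ) →ₗ[ℝ] ℝ, P.IsSupportAt f u) ∧
    ∀ f g : (T → ℝ) →ₗ[ℝ] ℝ, P.IsSupportAt f u → P.IsSupportAt g u →
      ∀ w : T → ℝ, P.memLPhi w → f w = g w

/-- `θ_Φ(u) = inf{λ > 0 : I_Φ(u/λ) < ∞}`. -/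
def thetaPhi (P : MOFunction T μ) (u : T → ℝ) : ℝ :=
  sInf {l : ℝ | 0 < l ∧ P.modular (fun t => u t / l) < ⊤}

end MOFunction

open MOFunction

variable {T : Type*} [MeasurableSpace T] {μ : Measure T}

/-!
Since `Φₙ ≤ Φₙ₊₁ ≤ Φ`, the norms `‖u‖_{Φₙ}` increase and stay below `‖u‖_Φ`. Conversely, if
`λ > L := supₙ ‖u‖_{Φₙ}` then `I_{Φₙ}(u/λ) ≤ 1` for every `n`, and by monotone convergence
`I_Φ(u/λ) = supₙ I_{Φₙ}(u/λ) ≤ 1`; so `u ∈ L^Φ` and `‖u‖_Φ ≤ L`.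
-/

/-- Lower semicontinuity makes a monotone function left-continuous, hence determined by its values
at rationals; this is what makes `t ↦ Φ(t, v t)` measurable although `Φ` is only assumed
measurable in `t`. -/
theorem Monotone.eq_iSup_rat_of_lowerSemicontinuous {φ : ℝ≥0∞ → ℝ≥0∞} (hm : Monotone φ)
    (hl : LowerSemicontinuous φ) (x : ℝ≥0∞) :
    φ x = ⨆ q : ℚ, if ENNReal.ofReal q ≤ x then φ (ENNReal.ofReal q) else 0 := by
  refine le_antisymm ?_ (iSup_le fun q => ?_)
  · rcases eq_or_ne x 0 with rfl | hx
    · exact le_iSup_of_le 0 (by simp)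
    refine le_of_forall_lt fun c hc => ?_
    have : (𝓝[<] x).NeBot := nhdsLT_neBot_of_exists_lt ⟨0, pos_iff_ne_zero.mpr hx⟩
    have hev : ∀ᶠ y in 𝓝[<] x, c < φ y := (hl x c hc).filter_mono nhdsWithin_le_nhds
    obtain ⟨y, hcy, hyx⟩ := (hev.and self_mem_nhdsWithin).exists
    obtain ⟨q, -, hyq, hqx⟩ := ENNReal.lt_iff_exists_rat_btwn.mp hyx
    calc c < φ y := hcy
      _ ≤ φ (ENNReal.ofReal q) := hm hyq.le
      _ ≤ _ := le_iSup_of_le q (if_pos (show ENNReal.ofReal q ≤ x from hqx.le)).ge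
  · split_ifs with h
    · exact hm h
    · exact zero_le

namespace MOFunction

theorem ae_toFun_mul_le (R : MOFunction T μ) :
    ∀ᵐ t ∂μ, ∀ (p : ℝ≥0) (x : ℝ≥0∞), p ≤ 1 → R.toFun t (p * x) ≤ p * R.toFun t x := by
  filter_upwards [R.convex', R.zero'] with t hconvex hzero p x hp
  simpa [hzero, ENNReal.smul_def] using hconvex x 0 p hp

theorem ae_monotone (R : MOFunction T μ) : ∀ᵐ t ∂μ, Monotone (R.toFun t) := by
  filter_upwards [R.ae_toFun_mul_le, R.top'] with t hmul htop x y hxy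
  rcases eq_or_ne y ⊤ with rfl | hy
  · simp [htop]
  rcases eq_or_ne y 0 with rfl | hy0
  · rw [nonpos_iff_eq_zero.mp hxy]
  have hxy' : x / y ≤ 1 := ENNReal.div_le_of_le_mul (by simpa using hxy)
  have hp : (x / y).toNNReal ≤ 1 := by
    simpa using ENNReal.toNNReal_mono ENNReal.one_ne_top hxy'
  have hcoe : ((x / y).toNNReal : ℝ≥0∞) = x / y := ENNReal.coe_toNNReal (ne_top_of_le_ne_top
    ENNReal.one_ne_top hxy')
  calc R.toFun t x = R.toFun t ((x / y).toNNReal * y) := by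
        rw [hcoe, ENNReal.div_mul_cancel hy0 hy]
    _ ≤ (x / y).toNNReal * R.toFun t y := hmul _ _ hp
    _ ≤ R.toFun t y := mul_le_of_le_one_left zero_le (ENNReal.coe_le_one_iff.mpr hp)

theorem aemeasurable_toFun_comp (R : MOFunction T μ) {v : T → ℝ≥0∞} (hv : Measurable v) :
    AEMeasurable (fun t => R.toFun t (v t)) μ := by
  refine ⟨fun t => ⨆ q : ℚ, if ENNReal.ofReal q ≤ v t then R.toFun t (ENNReal.ofReal q) else 0,
    Measurable.iSup fun q => Measurable.ite (measurableSet_le measurable_const hv)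
      (R.measurable' _) measurable_const, ?_⟩
  filter_upwards [R.ae_monotone, R.lsc'] with t hm hl
  exact hm.eq_iSup_rat_of_lowerSemicontinuous hl (v t)

theorem modular_mono (R : MOFunction T μ) {v w : T → ℝ} (h : ∀ t, |v t| ≤ |w t|) :
    R.modular v ≤ R.modular w :=
  lintegral_mono_ae <| R.ae_monotone.mono fun t hm => hm (ENNReal.ofReal_le_ofReal (h t))

theorem modular_const_mul_le (R : MOFunction T μ) {s : ℝ} (hs0 : 0 ≤ s) (hs1 : s ≤ 1)
    (w : T → ℝ) : R.modular (fun t => s * w t) ≤ ENNReal.ofReal s * R.modular w := by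
  have hp : s.toNNReal ≤ 1 := Real.toNNReal_le_one.mpr hs1
  calc R.modular (fun t => s * w t)
      = ∫⁻ t, R.toFun t (s.toNNReal * ENNReal.ofReal |w t|) ∂μ := by
        simp only [modular, abs_mul, abs_of_nonneg hs0, ENNReal.ofReal_mul hs0]
        rfl
    _ ≤ ∫⁻ t, s.toNNReal * R.toFun t (ENNReal.ofReal |w t|) ∂μ :=
        lintegral_mono_ae <| R.ae_toFun_mul_le.mono fun t hmul => hmul _ _ hp
    _ = ENNReal.ofReal s * R.modular w := lintegral_const_mul' _ _ ENNReal.coe_ne_top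

theorem modular_le_of_ae_le {R R' : MOFunction T μ}
    (h : ∀ᵐ t ∂μ, ∀ x, R.toFun t x ≤ R'.toFun t x) (w : T → ℝ) :
    R.modular w ≤ R'.modular w :=
  lintegral_mono_ae <| h.mono fun _ ht => ht _

theorem modular_eq_iSup_of_ae_monotone {P : MOFunction T μ} {Q : ℕ → MOFunction T μ}
    (hmono : ∀ᵐ t ∂μ, ∀ x, Monotone fun n => (Q n).toFun t x)
    (hsup : ∀ᵐ t ∂μ, ∀ x, ⨆ n, (Q n).toFun t x = P.toFun t x)
    {w : T → ℝ} (hw : Measurable w) : P.modular w = ⨆ n, (Q n).modular w := by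
  have hv : Measurable fun t => ENNReal.ofReal |w t| := ENNReal.measurable_ofReal.comp hw.abs
  simp only [modular]
  rw [← lintegral_iSup' (fun n => (Q n).aemeasurable_toFun_comp hv)
    (hmono.mono fun t ht => ht _)]
  exact lintegral_congr_ae <| hsup.mono fun t ht => (ht _).symm

def luxSet (R : MOFunction T μ) (u : T → ℝ) : Set ℝ :=
  {l | 0 < l ∧ R.modular (fun t => u t / l) ≤ 1}

theorem luxNorm_nonneg (R : MOFunction T μ) (u : T → ℝ) : 0 ≤ R.luxNorm u :=
  Real.sInf_nonneg fun _ hl => hl.1.le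

theorem bddBelow_luxSet (R : MOFunction T μ) (u : T → ℝ) : BddBelow (R.luxSet u) :=
  ⟨0, fun _ hl => hl.1.le⟩

theorem mem_luxSet_of_le {R : MOFunction T μ} {u : T → ℝ} {l r : ℝ} (hl : l ∈ R.luxSet u)
    (hlr : l ≤ r) : r ∈ R.luxSet u := by
  have hr : 0 < r := hl.1.trans_le hlr
  refine ⟨hr, (R.modular_mono fun t => ?_).trans hl.2⟩
  rw [abs_div, abs_div, abs_of_pos hl.1, abs_of_pos hr]
  gcongr
  exact hl.1

theorem mem_luxSet_of_luxNorm_lt {R : MOFunction T μ} {u : T → ℝ} {r : ℝ}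
    (hne : (R.luxSet u).Nonempty) (h : R.luxNorm u < r) : r ∈ R.luxSet u :=
  let ⟨_, hl, hlr⟩ := exists_lt_of_csInf_lt hne h
  mem_luxSet_of_le hl hlr.le

theorem luxSet_nonempty {R : MOFunction T μ} {u : T → ℝ} (hu : R.memLPhi u) :
    (R.luxSet u).Nonempty := by
  obtain ⟨-, l, hl, hfin⟩ := hu
  set I := R.modular fun t => l * u t
  -- shrinking `l u` by the factor `s = 1 / (I + 1)` brings the modular below `1`
  set s : ℝ := (I.toReal + 1)⁻¹
  have hs : 0 < s := by positivity
  have hs1 : s ≤ 1 := inv_le_one_of_one_le₀ (by simp)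
  refine ⟨(s * l)⁻¹, by positivity, ?_⟩
  calc R.modular (fun t => u t / (s * l)⁻¹) = R.modular (fun t => s * (l * u t)) := by
        congr 1
        ext t
        rw [div_inv_eq_mul]
        ring
    _ ≤ ENNReal.ofReal s * I := R.modular_const_mul_le hs.le hs1 _
    _ = ENNReal.ofReal (s * I.toReal) := by
        rw [ENNReal.ofReal_mul hs.le, ENNReal.ofReal_toReal hfin.ne]
    _ ≤ 1 := ENNReal.ofReal_le_one.mpr <| by
        rw [inv_mul_le_one₀ (by positivity)]
        linarith

theorem memLPhi_of_mem_luxSet {R : MOFunction T μ} {u : T → ℝ} {l : ℝ} (hu : Measurable u)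
    (hl : l ∈ R.luxSet u) : R.memLPhi u := by
  refine ⟨hu, l⁻¹, inv_pos.mpr hl.1, lt_of_le_of_lt ?_ ENNReal.one_lt_top⟩
  simpa only [div_eq_inv_mul] using hl.2

theorem luxNorm_le_of_ae_le {R R' : MOFunction T μ} {u : T → ℝ}
    (h : ∀ᵐ t ∂μ, ∀ x, R.toFun t x ≤ R'.toFun t x) (hne : (R'.luxSet u).Nonempty) :
    R.luxNorm u ≤ R'.luxNorm u :=
  csInf_le_csInf (R.bddBelow_luxSet u) hne fun _ hl =>
    ⟨hl.1, (modular_le_of_ae_le h _).trans hl.2⟩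

theorem mem_luxSet_of_forall_luxNorm_lt {P : MOFunction T μ} {Q : ℕ → MOFunction T μ}
    (hmono : ∀ᵐ t ∂μ, ∀ x, Monotone fun n => (Q n).toFun t x)
    (hsup : ∀ᵐ t ∂μ, ∀ x, ⨆ n, (Q n).toFun t x = P.toFun t x)
    {u : T → ℝ} (hu : Measurable u) (hne : ∀ n, ((Q n).luxSet u).Nonempty) {r : ℝ}
    (h : ∀ n, (Q n).luxNorm u < r) : r ∈ P.luxSet u := by
  refine ⟨((Q 0).luxNorm_nonneg u).trans_lt (h 0), ?_⟩
  rw [modular_eq_iSup_of_ae_monotone hmono hsup (hu.div_const r)]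
  exact iSup_le fun n => (mem_luxSet_of_luxNorm_lt (hne n) (h n)).2

end MOFunction

theorem stmt2_general (P : MOFunction T μ)
    (Q : ℕ → MOFunction T μ)
    (hconv : ∀ᵐ t ∂μ, ∀ x : ℝ≥0∞,
      (∀ n, (Q n).toFun t x ≤ (Q (n + 1)).toFun t x) ∧
      (⨆ n, (Q n).toFun t x) = P.toFun t x)
    (u : T → ℝ) (hu : Measurable u) (hmem : ∀ n, (Q n).memLPhi u)
    (hb : ∃ C : ℝ, ∀ n, (Q n).luxNorm u ≤ C) :
    P.memLPhi u ∧ Monotone (fun n => (Q n).luxNorm u) ∧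
      Tendsto (fun n => (Q n).luxNorm u) atTop (nhds (P.luxNorm u)) := by
  have hmono : ∀ᵐ t ∂μ, ∀ x, Monotone fun n => (Q n).toFun t x :=
    hconv.mono fun t ht x => monotone_nat_of_le_succ (ht x).1
  have hsup : ∀ᵐ t ∂μ, ∀ x, ⨆ n, (Q n).toFun t x = P.toFun t x :=
    hconv.mono fun t ht x => (ht x).2
  have hne n := luxSet_nonempty (hmem n)
  have hQ : Monotone fun n => (Q n).luxNorm u := fun n m hnm =>
    luxNorm_le_of_ae_le (hmono.mono fun t ht x => ht x hnm) (hne m)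
  obtain ⟨C, hC⟩ := hb
  have hbdd : BddAbove (Set.range fun n => (Q n).luxNorm u) := ⟨C, Set.forall_mem_range.mpr hC⟩
  set L := ⨆ n, (Q n).luxNorm u
  have hL : ∀ r, L < r → r ∈ P.luxSet u := fun r hr =>
    mem_luxSet_of_forall_luxNorm_lt hmono hsup hu hne fun n => (le_ciSup hbdd n).trans_lt hr
  have hPL : P.luxNorm u = L := by
    refine le_antisymm (le_of_forall_gt_imp_ge_of_dense fun r hr =>
      csInf_le (P.bddBelow_luxSet u) (hL r hr)) (ciSup_le fun n => ?_)
    exact luxNorm_le_of_ae_le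
      (hsup.mono fun t ht x => (le_iSup (fun k => (Q k).toFun t x) n).trans (ht x).le)
      ⟨L + 1, hL _ (lt_add_one L)⟩
  exact ⟨memLPhi_of_mem_luxSet hu (hL _ (lt_add_one L)), hQ, hPL ▸ tendsto_atTop_ciSup hQ hbdd⟩

/-- convergence of Luxemburg norms along an increasing sequence of
finite-valued Musielak--Orlicz functions. -/
theorem stmt2 [SigmaFinite μ] (hna : IsNonatomic μ) (P : MOFunction T μ)
    (Q : ℕ → MOFunction T μ)
    (hfin : ∀ n, ∀ᵐ t ∂μ, ∀ x : ℝ≥0∞, x ≠ ⊤ → (Q n).toFun t x < ⊤)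
    (hconv : ∀ᵐ t ∂μ, ∀ x : ℝ≥0∞,
      (∀ n, (Q n).toFun t x ≤ (Q (n + 1)).toFun t x) ∧
      (⨆ n, (Q n).toFun t x) = P.toFun t x)
    (u : T → ℝ) (hu : Measurable u) (hmem : ∀ n, (Q n).memLPhi u)
    (hb : ∃ C : ℝ, ∀ n, (Q n).luxNorm u ≤ C) :
    P.memLPhi u ∧ Monotone (fun n => (Q n).luxNorm u) ∧
      Tendsto (fun n => (Q n).luxNorm u) atTop (nhds (P.luxNorm u)) :=
  stmt2_general P Q hconv u hu hmem hb
end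
end

section
/- If u ∈ L^Φ satisfies I_Φ(u) = ∞, then there exists a sequence of measurable functions (u_n) with |u| ≥ u_n ↓ 0 pointwise and I_Φ(u_n) = ∞ for all n ≥ 1. -/
open MeasureTheory ENNReal NNReal Filter Topology

noncomputable section

open MOFunction

variable {T : Type*} [MeasurableSpace T] {μ : Measure T}

/-!
Write `F t = Φ(t, |u t|)`. Since `Φ(t, ·)` is a.e. nondecreasing and lower semicontinuous, `F` is
a.e. the supremum of `Φ(t, q)` over rationals `q ≤ |u t|`, hence a.e.-measurable. It then suffices
to find measurable sets `E n` decreasing to `∅` with `∫_{E n} F = ∞`, and to take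
`u n = 1_{E n} |u|`.

If `F < ∞` a.e., let `E n = {F > n} ∪ (S n)ᶜ` (restricted to `{F < ∞}`), where `S n` are the
spanning sets of finite measure: off `E n` we have `F ≤ n` on `S n`, so the integral there is
finite. Otherwise `F = ∞` on a set `Z` of positive measure; non-atomicity yields a chain
`Z = R 0 ⊇ R 1 ⊇ …` with `μ (R (n+1)) < μ (R n)`, and then `E n = R n \ ⋂ k, R k` has positive
measure, hence infinite integral, while `⋂ n, E n = ∅`.
-/

lemma monotone_of_map_mul_le {φ : ℝ≥0∞ → ℝ≥0∞}
    (hφ : ∀ (a : ℝ≥0∞) (p : ℝ≥0), p ≤ 1 → φ (p * a) ≤ p * φ a) (htop : φ ⊤ = ⊤) :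
    Monotone φ := by
  intro x y hxy
  rcases eq_or_ne y ⊤ with rfl | hy
  · rw [htop]; exact le_top
  rcases eq_or_ne y 0 with rfl | hy0
  · rw [nonpos_iff_eq_zero.mp hxy]
  have hp : x / y ≠ ⊤ := ENNReal.div_ne_top (ne_top_of_le_ne_top hy hxy) hy0
  have hp1 : (x / y).toNNReal ≤ 1 := by
    rw [← ENNReal.coe_le_one_iff, ENNReal.coe_toNNReal hp]
    exact ENNReal.div_le_of_le_mul (by rwa [one_mul])
  calc φ x = φ ((x / y).toNNReal * y) := by
        rw [ENNReal.coe_toNNReal hp, ENNReal.div_mul_cancel hy0 hy]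
    _ ≤ (x / y).toNNReal * φ y := hφ y _ hp1
    _ ≤ φ y := mul_le_of_le_one_left' (by exact_mod_cast hp1)

lemma Monotone.iSup_rat_le_eq_of_lowerSemicontinuous {φ : ℝ≥0∞ → ℝ≥0∞} (hmono : Monotone φ)
    (hlsc : LowerSemicontinuous φ) (x : ℝ≥0∞) :
    ⨆ (q : ℚ) (_ : ENNReal.ofReal q ≤ x), φ (ENNReal.ofReal q) = φ x := by
  refine le_antisymm (iSup₂_le fun q hq => hmono hq) (le_of_forall_lt fun c hc => ?_)
  rcases eq_or_ne x 0 with rfl | hx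
  · exact hc.trans_le (le_iSup₂_of_le (0 : ℚ) (by simp) (by simp))
  have : (𝓝[<] x).NeBot := nhdsLT_neBot_of_exists_lt ⟨0, pos_iff_ne_zero.mpr hx⟩
  obtain ⟨y, hcy, hyx⟩ := (((hlsc x c hc).filter_mono nhdsWithin_le_nhds).and
    (self_mem_nhdsWithin (s := Set.Iio x))).exists
  obtain ⟨q, -, hyq, hqx⟩ := ENNReal.lt_iff_exists_rat_btwn.mp hyx
  exact hcy.trans_le ((hmono hyq.le).trans (le_iSup₂_of_le q hqx.le le_rfl))

lemma IsNonatomic.exists_antitone_subset_iInter_eq_empty (hna : IsNonatomic μ) {s : Set T}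
    (hs : MeasurableSet s) (hμs : 0 < μ s) :
    ∃ E : ℕ → Set T, (∀ n, MeasurableSet (E n)) ∧ Antitone E ∧ (∀ n, E n ⊆ s) ∧
      ⋂ n, E n = ∅ ∧ ∀ n, 0 < μ (E n) := by
  choose! shrink hsub hmeas hpos hlt using hna
  set R : ℕ → Set T := fun n => shrink^[n] s
  have hRsucc (n : ℕ) : R (n + 1) = shrink (R n) := Function.iterate_succ_apply' _ _ _
  have hR (n : ℕ) : MeasurableSet (R n) ∧ 0 < μ (R n) := by
    induction n with
    | zero => exact ⟨hs, hμs⟩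
    | succ n ih => exact hRsucc n ▸ ⟨hmeas _ ih.1 ih.2, hpos _ ih.1 ih.2⟩
  have hRanti : Antitone R :=
    antitone_nat_of_succ_le fun n => hRsucc n ▸ hsub _ (hR n).1 (hR n).2
  refine ⟨fun n => R n \ ⋂ k, R k, fun n => (hR n).1.diff (.iInter fun k => (hR k).1),
    fun m n hmn => Set.sdiff_subset_sdiff_left (hRanti hmn),
    fun n => Set.sdiff_subset.trans (hRanti (Nat.zero_le n)), ?_, fun n => ?_⟩
  · refine Set.eq_empty_of_forall_notMem fun t ht => ?_
    exact (Set.mem_iInter.1 ht 0).2 (Set.mem_iInter.2 fun k => (Set.mem_iInter.1 ht k).1)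
  · refine pos_iff_ne_zero.mpr fun h0 => (lt_irrefl (μ (R n))) ?_
    calc μ (R n) ≤ μ (R n \ ⋂ k, R k) + μ (⋂ k, R k) :=
          (measure_mono (Set.subset_sdiff_union _ _)).trans (measure_union_le _ _)
      _ ≤ μ (R (n + 1)) := by rw [h0, zero_add]; exact measure_mono (Set.iInter_subset _ _)
      _ < μ (R n) := hRsucc n ▸ hlt _ (hR n).1 (hR n).2

lemma exists_antitone_iInter_eq_empty_setLIntegral_eq_top_of_ae_ne_top [SigmaFinite μ]
    {f : T → ℝ≥0∞} (hf : Measurable f) (hfin : ∀ᵐ t ∂μ, f t ≠ ⊤) (h : ∫⁻ t, f t ∂μ = ⊤) :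
    ∃ E : ℕ → Set T, (∀ n, MeasurableSet (E n)) ∧ Antitone E ∧ ⋂ n, E n = ∅ ∧
      ∀ n, ∫⁻ t in E n, f t ∂μ = ⊤ := by
  set S := spanningSets μ
  set E : ℕ → Set T := fun n => {t | f t ≠ ⊤} ∩ ({t | (n : ℝ≥0∞) < f t} ∪ (S n)ᶜ)
  have hE (n : ℕ) : MeasurableSet (E n) :=
    (hf (measurableSet_singleton ⊤)).compl.inter
      ((measurableSet_lt measurable_const hf).union (measurableSet_spanningSets μ n).compl)
  refine ⟨E, hE, fun m n hmn => ?_, ?_, fun n => ?_⟩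
  · refine Set.inter_subset_inter_right _ (Set.union_subset_union (fun t ht => ?_) ?_)
    · exact (Nat.cast_le.mpr hmn : (m : ℝ≥0∞) ≤ n).trans_lt ht
    · exact Set.compl_subset_compl.mpr (monotone_spanningSets μ hmn)
  · refine Set.eq_empty_of_forall_notMem fun t ht => ?_
    rw [Set.mem_iInter] at ht
    obtain ⟨k, hk⟩ := ENNReal.exists_nat_gt (ht 0).1
    set N := spanningSetsIndex μ t
    rcases (ht (max k N)).2 with hlt | hnotin
    · exact lt_asymm hlt (hk.trans_le (Nat.cast_le.mpr (le_max_left k N)))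
    · exact hnotin (monotone_spanningSets μ (le_max_right k N) (mem_spanningSetsIndex μ t))
  · set g : T → ℝ≥0∞ := (S n).indicator fun _ => (n : ℝ≥0∞)
    have hcompl : ∫⁻ t in (E n)ᶜ, f t ∂μ < ⊤ := by
      calc ∫⁻ t in (E n)ᶜ, f t ∂μ ≤ ∫⁻ t in (E n)ᶜ, g t ∂μ := by
            refine setLIntegral_mono_ae' (hE n).compl ?_
            filter_upwards [hfin] with t hft ht
            simp only [E, Set.mem_compl_iff, Set.mem_inter_iff, Set.mem_ofPred_eq, Set.mem_union,
              not_and, not_or, not_lt, not_not] at ht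
            obtain ⟨hle, hS⟩ := ht hft
            simpa [g, hS] using hle
        _ ≤ ∫⁻ t, g t ∂μ := setLIntegral_le_lintegral _ _
        _ = n * μ (S n) := lintegral_indicator_const (measurableSet_spanningSets μ n) _
        _ < ⊤ := ENNReal.mul_lt_top (by simp) (measure_spanningSets_lt_top μ n)
    have hsplit := lintegral_add_compl f (hE n) (μ := μ)
    rw [h] at hsplit
    by_contra hne
    exact ENNReal.add_ne_top.mpr ⟨hne, hcompl.ne⟩ hsplit

lemma exists_antitone_iInter_eq_empty_setLIntegral_eq_top [SigmaFinite μ] (hna : IsNonatomic μ)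
    {f : T → ℝ≥0∞} (hf : Measurable f) (h : ∫⁻ t, f t ∂μ = ⊤) :
    ∃ E : ℕ → Set T, (∀ n, MeasurableSet (E n)) ∧ Antitone E ∧ ⋂ n, E n = ∅ ∧
      ∀ n, ∫⁻ t in E n, f t ∂μ = ⊤ := by
  set Z := f ⁻¹' {⊤}
  have hZ : MeasurableSet Z := hf (measurableSet_singleton ⊤)
  rcases eq_or_ne (μ Z) 0 with hZ0 | hZ0
  · exact exists_antitone_iInter_eq_empty_setLIntegral_eq_top_of_ae_ne_top hf
      (measure_eq_zero_iff_ae_notMem.mp hZ0) h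
  obtain ⟨E, hEm, hEanti, hEZ, hEempty, hEpos⟩ :=
    hna.exists_antitone_subset_iInter_eq_empty hZ (pos_iff_ne_zero.mpr hZ0)
  refine ⟨E, hEm, hEanti, hEempty, fun n => ?_⟩
  rw [setLIntegral_congr_fun (hEm n) fun t ht => hEZ n ht, setLIntegral_const,
    ENNReal.top_mul (hEpos n).ne']

lemma tendsto_indicator_of_antitone_of_iInter_eq_empty {α β : Type*} [Zero β]
    [TopologicalSpace β] {E : ℕ → Set α} (hE : Antitone E) (hempty : ⋂ n, E n = ∅) (g : α → β)
    (a : α) : Tendsto (fun n => (E n).indicator g a) atTop (𝓝 0) := by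
  obtain ⟨N, hN⟩ : ∃ N, a ∉ E N := by
    simpa using Set.eq_empty_iff_forall_notMem.mp hempty a
  refine tendsto_const_nhds.congr' ?_
  filter_upwards [eventually_ge_atTop N] with n hn
  exact (Set.indicator_of_notMem (fun ha => hN (hE hn ha)) g).symm

namespace MOFunction

variable (P : MOFunction T μ)

lemma ae_monotone_s6 : ∀ᵐ t ∂μ, Monotone (P.toFun t) := by
  filter_upwards [P.convex', P.zero', P.top'] with t hconv hzero htop
  refine monotone_of_map_mul_le (fun a p hp => ?_) htop
  simpa [hzero, ENNReal.smul_def] using hconv a 0 p hp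

lemma aemeasurable_toFun_comp_s6 {x : T → ℝ≥0∞} (hx : Measurable x) :
    AEMeasurable (fun t => P.toFun t (x t)) μ := by
  refine ⟨fun t => ⨆ q : ℚ, if ENNReal.ofReal q ≤ x t then P.toFun t (ENNReal.ofReal q) else 0,
    .iSup fun q => .ite (measurableSet_le measurable_const hx) (P.measurable' _) measurable_const,
    ?_⟩
  filter_upwards [P.ae_monotone_s6, P.lsc'] with t hmono hlsc
  simp only [← hmono.iSup_rat_le_eq_of_lowerSemicontinuous hlsc (x t), iSup_eq_if,
    ENNReal.bot_eq_zero]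

lemma modular_indicator (u : T → ℝ) {s : Set T} (hs : MeasurableSet s) :
    P.modular (s.indicator u) = ∫⁻ t in s, P.toFun t (ENNReal.ofReal |u t|) ∂μ := by
  rw [modular, ← lintegral_indicator hs]
  refine lintegral_congr_ae ?_
  filter_upwards [P.zero'] with t hzero
  by_cases ht : t ∈ s <;> simp [ht, hzero]

end MOFunction

/-- if `I_Φ(u) = ∞` then there is a sequence `|u| ≥ u_n ↓ 0` with
`I_Φ(u_n) = ∞` for every `n`. -/
theorem stmt6 [SigmaFinite μ] (hna : IsNonatomic μ) (P : MOFunction T μ)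
    (u : T → ℝ) (hu : P.memLPhi u) (h : P.modular u = ⊤) :
    ∃ un : ℕ → T → ℝ, (∀ n, Measurable (un n)) ∧
      (∀ n t, 0 ≤ un n t ∧ un n t ≤ |u t|) ∧
      (∀ n t, un (n + 1) t ≤ un n t) ∧
      (∀ t, Tendsto (fun n => un n t) atTop (nhds 0)) ∧
      ∀ n, P.modular (un n) = ⊤ := by
  have hf := P.aemeasurable_toFun_comp_s6 (x := fun t => ENNReal.ofReal |u t|)
    (ENNReal.measurable_ofReal.comp hu.1.abs)
  have hmk : ∫⁻ t, hf.mk _ t ∂μ = ⊤ := (lintegral_congr_ae hf.ae_eq_mk).symm.trans h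
  obtain ⟨E, hEm, hEanti, hEempty, hEint⟩ :=
    exists_antitone_iInter_eq_empty_setLIntegral_eq_top hna hf.measurable_mk hmk
  refine ⟨fun n => (E n).indicator fun t => |u t|, fun n => hu.1.abs.indicator (hEm n),
    fun n t => ⟨Set.indicator_nonneg (fun _ _ => abs_nonneg _) t,
      Set.indicator_le_self' (fun _ _ => abs_nonneg _) t⟩,
    fun n t => Set.indicator_le_indicator_of_subset (hEanti n.le_succ) (fun _ => abs_nonneg _) t,
    tendsto_indicator_of_antitone_of_iInter_eq_empty hEanti hEempty _, fun n => ?_⟩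
  rw [P.modular_indicator _ (hEm n), ← hEint n]
  simp_rw [abs_abs]
  exact setLIntegral_congr_fun_ae (hEm n) (hf.ae_eq_mk.mono fun t ht _ => ht)
end
end
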